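/- arXiv:1205.2996 — 2 statements merged into one kernel-verified Lean document; each statement's English description precedes it below -/
import Mathlib

section
/- Generalized Shannon inequality: for any regular binary game and any stationary probability measure P on Σ^∞, and all natural numbers m ≥ 1 and n ≥ 0, the conditional generalized entropy satisfies H_{m|n} ≤ H_m. -/
open MeasureTheory ENNReal Filter Topology

noncomputable section

/-- A regular binary game `(Σ, Γ, λ)` with `Σ = {0,1}` (encoded as `Bool`, bit `0 = false`),
prediction space `Γ = [0,1]` and loss function `λ : Σ × [0,1] → [0,∞]` that is continuous,
convex in the prediction, and admits a prediction of finite loss on both outcomes. -/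
structure RegularGame where
  loss : Bool → ℝ → ℝ≥0∞
  continuousOn : ∀ b, ContinuousOn (loss b) (Set.Icc 0 1)
  convex : ∀ b : Bool, ∀ γ₁ ∈ Set.Icc (0:ℝ) 1, ∀ γ₂ ∈ Set.Icc (0:ℝ) 1,
      ∀ t ∈ Set.Icc (0:ℝ) 1,
      loss b (t * γ₁ + (1 - t) * γ₂)
        ≤ ENNReal.ofReal t * loss b γ₁ + ENNReal.ofReal (1 - t) * loss b γ₂
  finite_pred : ∃ γ ∈ Set.Icc (0:ℝ) 1, loss false γ < ⊤ ∧ loss true γ < ⊤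

/-- A prediction strategy: for each history length `i`, a map from `i`-bit histories
to predictions in `[0,1]`. -/
def Strategy : Type := (i : ℕ) → (Fin i → Bool) → Set.Icc (0:ℝ) 1

/-- Cumulative loss of a strategy on the finite string `w`. -/
def strategyLoss (G : RegularGame) {n : ℕ} (w : Fin n → Bool) (S : Strategy) : ℝ≥0∞ :=
  ∑ i : Fin n, G.loss (w i)
    ((S i.val (fun j : Fin i.val => w ⟨j.val, j.isLt.trans i.isLt⟩) : Set.Icc (0:ℝ) 1) : ℝ)

/-- Cylinder set of the finite string `w` in `Σ^∞`. -/
def cyl {n : ℕ} (w : Fin n → Bool) : Set (ℕ → Bool) := {ω | ∀ i : Fin n, ω i.val = w i}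

/-- The `n`-step generalized entropy `H_n = inf_℘ Σ_{w ∈ Σ^n} P(w)·Loss(w,℘)`. -/
def Hn (G : RegularGame) (P : Measure (ℕ → Bool)) (n : ℕ) : ℝ≥0∞ :=
  ⨅ S : Strategy, ∑ w : Fin n → Bool, P (cyl w) * strategyLoss G w S

/-- The generalized conditional entropy
`H_{n|m} = inf_℘ Σ_{w∈Σ^m, x∈Σ^n} P(w·x) · Σ_{i<n} λ(x_i, ℘^{m+i}(w·x_0⋯x_{i−1}))`. -/
def Hcond (G : RegularGame) (P : Measure (ℕ → Bool)) (n m : ℕ) : ℝ≥0∞ :=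
  ⨅ S : Strategy, ∑ w : Fin m → Bool, ∑ x : Fin n → Bool,
    P (cyl (Fin.append w x)) *
      ∑ i : Fin n, G.loss (x i)
        ((S (m + i.val)
          (Fin.append w (fun j : Fin i.val => x ⟨j.val, j.isLt.trans i.isLt⟩)) : Set.Icc (0:ℝ) 1) : ℝ)

/-- The left shift on one-sided sequences. -/
def shiftN : (ℕ → Bool) → (ℕ → Bool) := fun ω n => ω (n + 1)

/-! Given a strategy `S` for `H_m`, let the conditional predictor ignore the `n`-bit prefix and
play `S` on the last `m` bits. Its conditional loss on `w·x` is `Loss(x, S)`, and summing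
`P(w·x)` over the prefixes `w` gives `P(shift⁻ⁿ (cyl x)) = P(x)` by stationarity, so this
predictor attains the same expected loss as `S`. -/

lemma measurable_shiftN : Measurable shiftN :=
  measurable_pi_lambda _ fun n => measurable_pi_apply (n + 1)

lemma shiftN_iterate_apply (n : ℕ) (ω : ℕ → Bool) (k : ℕ) :
    shiftN^[n] ω k = ω (n + k) := by
  induction n generalizing k with
  | zero => simp
  | succ n ih =>
    rw [Function.iterate_succ_apply', shiftN, ih]
    ring_nf

lemma measurableSet_cyl {n : ℕ} (w : Fin n → Bool) : MeasurableSet (cyl w) := by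
  have h : cyl w = ⋂ i : Fin n, (fun ω : ℕ → Bool => ω i) ⁻¹' {w i} := by
    ext ω; simp [cyl]
  rw [h]
  exact .iInter fun i => measurable_pi_apply _ (measurableSet_singleton _)

lemma preimage_shiftN_iterate_cyl {n m : ℕ} (x : Fin m → Bool) :
    shiftN^[n] ⁻¹' cyl x = ⋃ w : Fin n → Bool, cyl (Fin.append w x) := by
  ext ω
  simp only [Set.mem_iUnion, Set.mem_preimage, cyl, Set.mem_ofPred_eq, shiftN_iterate_apply]
  constructor
  · intro h
    refine ⟨fun j => ω j, Fin.addCases (fun j => ?_) (fun j => ?_)⟩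
    · rw [Fin.append_left]; rfl
    · rw [Fin.append_right]; exact h j
  · rintro ⟨w, hw⟩ i
    simpa using hw (Fin.natAdd n i)

lemma pairwise_disjoint_cyl_append {n m : ℕ} (x : Fin m → Bool) :
    Pairwise (Function.onFun Disjoint fun w : Fin n → Bool => cyl (Fin.append w x)) := by
  intro w w' hne
  refine Set.disjoint_left.mpr fun ω hω hω' => hne (funext fun j => ?_)
  simpa using (hω (Fin.castAdd m j)).symm.trans (hω' (Fin.castAdd m j))

lemma sum_measure_cyl_append {P : Measure (ℕ → Bool)} (hstat : P.map shiftN = P)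
    {n m : ℕ} (x : Fin m → Bool) :
    ∑ w : Fin n → Bool, P (cyl (Fin.append w x)) = P (cyl x) := by
  have hP : MeasurePreserving shiftN P P := ⟨measurable_shiftN, hstat⟩
  rw [← (hP.iterate n).measure_preimage (measurableSet_cyl x).nullMeasurableSet,
    preimage_shiftN_iterate_cyl,
    measure_iUnion (pairwise_disjoint_cyl_append x) fun w => measurableSet_cyl _, tsum_fintype]

def Strategy.dropPrefix (S : Strategy) (n : ℕ) : Strategy :=
  fun i h => S (i - n) fun j => h ⟨n + j, by omega⟩

lemma Strategy.apply_congr (S : Strategy) {k k' : ℕ} (e : k' = k) {f : Fin k' → Bool}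
    {g : Fin k → Bool} (hfg : ∀ j, f j = g (Fin.cast e j)) : S k' f = S k g := by
  subst e
  exact congrArg (S k') (funext hfg)

lemma condLoss_dropPrefix (G : RegularGame) (S : Strategy) {n m : ℕ}
    (w : Fin n → Bool) (x : Fin m → Bool) :
    ∑ i : Fin m, G.loss (x i)
        ((S.dropPrefix n (n + i)
          (Fin.append w fun j : Fin i => x ⟨j, j.isLt.trans i.isLt⟩) : Set.Icc (0:ℝ) 1) : ℝ)
      = strategyLoss G x S := by
  refine Finset.sum_congr rfl fun i _ => ?_
  rw [Strategy.dropPrefix, S.apply_congr (Nat.add_sub_cancel_left ..) fun j => ?_]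
  exact Fin.append_right w _ (Fin.cast (Nat.add_sub_cancel_left ..) j)

theorem generalized_shannon_inequality_general
    (G : RegularGame) (P : Measure (ℕ → Bool))
    (hstat : P.map shiftN = P)
    (m n : ℕ) :
    Hcond G P m n ≤ Hn G P m := by
  refine le_iInf fun S => iInf_le_of_le (S.dropPrefix n) (le_of_eq ?_)
  simp only [condLoss_dropPrefix]
  rw [Finset.sum_comm]
  simp only [← Finset.sum_mul, sum_measure_cyl_append hstat]

/-- **Generalized Shannon inequality.** For any regular binary game, any stationary
probability measure `P` on `Σ^∞`, and all `m ≥ 1`, `n ≥ 0`, we have `H_{m|n} ≤ H_m`. -/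
theorem generalized_shannon_inequality
    (G : RegularGame) (P : Measure (ℕ → Bool)) [IsProbabilityMeasure P]
    (hstat : P.map shiftN = P)
    (m n : ℕ) (hm : 1 ≤ m) :
    Hcond G P m n ≤ Hn G P m :=
  generalized_shannon_inequality_general G P hstat m n
end
end

section
/- Let (Ω, F, P) be a probability space, T : Ω → Ω a measure-preserving ergodic transformation, and let g_k, g : Ω → [0,∞) be integrable functions with g_k → g P-almost everywhere such that the sequence G_N(ω) := sup_{k ≥ N} |g_k(ω) − g(ω)| (N = 1, 2, …) is uniformly integrable. Then for P-almost every ω, (1/n) Σ_{k=0}^{n−1} (g_k(T^k ω) − g(T^k ω)) → 0 as n → ∞; more precisely, for every N, limsup_{n→∞} |(1/n) Σ_{k=0}^{n−1} (g_k(T^k ω) − g(T^k ω))| ≤ ∫ G_N dP for P-almost every ω. -/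
/-!
For `k ≥ N` the deviation `|g_k - g|(T^k ω)` is at most `G_N(T^k ω)`, so up to the `O(1/n)`
contribution of the first `N` terms the averaged deviations are bounded by the Birkhoff averages
of `G_N`, whose limsup is at most `∫ G_N` almost everywhere. This upper half of Birkhoff's
ergodic theorem follows from the maximal ergodic theorem (Garsia's argument) and ergodicity.
Uniform integrability makes `G_0` integrable, and `G_N ↓ 0` a.e., so `∫ G_N → 0` by dominated
convergence.
-/

open MeasureTheory ENNReal Filter Topology

noncomputable section

/-- A sequence of `[0,∞]`-valued functions `F_N` is uniformly integrable if
`lim_{α→∞} sup_N ∫ F_N · 1_{[F_N > α]} dP = 0`. -/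
def UnifIntENN {Ω : Type*} [MeasurableSpace Ω] (P : Measure Ω) (F : ℕ → Ω → ℝ≥0∞) : Prop :=
  Tendsto (fun α : ℝ => ⨆ N : ℕ, ∫⁻ ω in {ω | ENNReal.ofReal α < F N ω}, F N ω ∂P)
    atTop (𝓝 0)

/-- The tail supremum `G_N(ω) = sup_{k ≥ N} |g_k(ω) − g(ω)|` (valued in `[0,∞]`). -/
def tailSup {Ω : Type*} (g : ℕ → Ω → ℝ) (g0 : Ω → ℝ) (N : ℕ) (ω : Ω) : ℝ≥0∞ :=
  ⨆ k : ℕ, ⨆ _ : N ≤ k, ENNReal.ofReal |g k ω - g0 ω|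

section Garsia

variable {Ω : Type*} {T : Ω → Ω} {φ : Ω → ℝ}

lemma partialSups_birkhoffSum_nonneg (N : ℕ) (x : Ω) :
    0 ≤ partialSups (birkhoffSum T φ) N x :=
  le_partialSups_of_le (birkhoffSum T φ) (Nat.zero_le N) x

lemma partialSups_birkhoffSum_le_max_add_comp (N : ℕ) (x : Ω) :
    partialSups (birkhoffSum T φ) N x ≤ max 0 (φ x + partialSups (birkhoffSum T φ) N (T x)) := by
  refine partialSups_le (birkhoffSum T φ) N
    (fun y => max 0 (φ y + partialSups (birkhoffSum T φ) N (T y))) (fun j hj y => ?_) x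
  cases j with
  | zero => simp
  | succ j =>
    rw [birkhoffSum_succ']
    have := le_partialSups_of_le (birkhoffSum T φ) (Nat.le_of_succ_le hj) (T y)
    exact le_max_of_le_right (by gcongr)

variable [MeasurableSpace Ω] {μ : Measure Ω}

lemma measurable_birkhoffSum (hT : Measurable T) (hφ : Measurable φ) (n : ℕ) :
    Measurable (birkhoffSum T φ n) :=
  Finset.measurable_sum _ fun k _ => hφ.comp (hT.iterate k)

lemma integrable_birkhoffSum (hT : MeasurePreserving T μ μ) (hφ : Integrable φ μ) (n : ℕ) :
    Integrable (birkhoffSum T φ n) μ :=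
  integrable_finsetSum _ fun k _ => (hT.iterate k).integrable_comp_of_integrable hφ

lemma measurable_partialSups {f : ℕ → Ω → ℝ} (hf : ∀ n, Measurable (f n)) (N : ℕ) :
    Measurable (partialSups f N) := by
  rw [partialSups_eq_sup'_range]
  exact Finset.measurable_sup' _ fun n _ => hf n

lemma integrable_partialSups {f : ℕ → Ω → ℝ} (hf : ∀ n, Integrable (f n) μ) (N : ℕ) :
    Integrable (partialSups f N) μ := by
  rw [partialSups_eq_sup'_range]
  exact Finset.sup'_induction (p := fun g => Integrable g μ) _ _
    (fun _ h _ h' => h.sup h') fun n _ => hf n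

/-- Garsia's proof: the maximal function `M` of the Birkhoff sums satisfies `M ≤ φ + M ∘ T`
where it is positive, vanishes elsewhere, and `∫ M ∘ T = ∫ M`. -/
theorem setIntegral_partialSups_birkhoffSum_pos_nonneg [IsFiniteMeasure μ]
    (hT : MeasurePreserving T μ μ) (hφm : Measurable φ) (hφ : Integrable φ μ) (N : ℕ) :
    0 ≤ ∫ x in {x | 0 < partialSups (birkhoffSum T φ) N x}, φ x ∂μ := by
  set M := partialSups (birkhoffSum T φ) N
  have hMm : Measurable M := measurable_partialSups (measurable_birkhoffSum hT.measurable hφm) N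
  have hM : Integrable M μ := integrable_partialSups (integrable_birkhoffSum hT hφ) N
  have hMT : Integrable (M ∘ T) μ := hT.integrable_comp_of_integrable hM
  have hMT_eq : ∫ x, M (T x) ∂μ = ∫ x, M x ∂μ := by
    rw [← integral_map hT.aemeasurable hMm.aestronglyMeasurable, hT.map_eq]
  have hMA : ∫ x in {x | 0 < M x}, M x ∂μ = ∫ x, M x ∂μ :=
    setIntegral_eq_integral_of_forall_compl_eq_zero fun x hx =>
      le_antisymm (not_lt.mp hx) (partialSups_birkhoffSum_nonneg N x)
  calc 0 = ∫ x, M x ∂μ - ∫ x, M (T x) ∂μ := by rw [hMT_eq, sub_self]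
    _ ≤ ∫ x in {x | 0 < M x}, M x ∂μ - ∫ x in {x | 0 < M x}, M (T x) ∂μ := by
      rw [hMA]
      exact sub_le_sub_left (setIntegral_le_integral hMT
        (.of_forall fun x => partialSups_birkhoffSum_nonneg N (T x))) _
    _ = ∫ x in {x | 0 < M x}, (M x - M (T x)) ∂μ :=
      (integral_sub hM.integrableOn hMT.integrableOn).symm
    _ ≤ ∫ x in {x | 0 < M x}, φ x ∂μ := by
      refine setIntegral_mono_on (hM.sub hMT).integrableOn hφ.integrableOn
        (measurableSet_lt measurable_const hMm) fun x (hx : 0 < M x) => ?_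
      have : M x ≤ φ x + M (T x) :=
        (le_max_iff.mp (partialSups_birkhoffSum_le_max_add_comp N x)).resolve_left hx.not_ge
      linarith

theorem setIntegral_iUnion_partialSups_birkhoffSum_pos_nonneg [IsFiniteMeasure μ]
    (hT : MeasurePreserving T μ μ) (hφm : Measurable φ) (hφ : Integrable φ μ) :
    0 ≤ ∫ x in ⋃ N, {x | 0 < partialSups (birkhoffSum T φ) N x}, φ x ∂μ := by
  have hmeas : ∀ N, MeasurableSet {x | 0 < partialSups (birkhoffSum T φ) N x} := fun N =>
    measurableSet_lt measurable_const
      (measurable_partialSups (measurable_birkhoffSum hT.measurable hφm) N)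
  have hmono : Monotone fun N => {x | 0 < partialSups (birkhoffSum T φ) N x} :=
    fun _ _ h x hx => hx.trans_le ((partialSups (birkhoffSum T φ)).monotone h x)
  exact ge_of_tendsto' (tendsto_setIntegral_of_monotone hmeas hmono hφ.integrableOn)
    (setIntegral_partialSups_birkhoffSum_pos_nonneg hT hφm hφ)

end Garsia

section BirkhoffUpperBound

variable {Ω : Type*} {T : Ω → Ω} {f : Ω → ℝ}

lemma birkhoffSum_sub_const (c : ℝ) (n : ℕ) (x : Ω) :
    birkhoffSum T (fun y => f y - c) n x = birkhoffSum T f n x - n * c := by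
  simp [birkhoffSum, Finset.sum_sub_distrib]

lemma limsup_ofReal_birkhoffSum_div_le_comp (hf : ∀ x, 0 ≤ f x) (x : Ω) :
    limsup (fun n : ℕ => ENNReal.ofReal (birkhoffSum T f n x / n)) atTop ≤
      limsup (fun n : ℕ => ENNReal.ofReal (birkhoffSum T f n (T x) / n)) atTop := by
  have hfx : Tendsto (fun n : ℕ => ENNReal.ofReal (f x / (n + 1))) atTop (𝓝 0) := by
    simpa using ENNReal.tendsto_ofReal
      ((tendsto_const_div_atTop_nhds_zero_nat (f x)).comp (tendsto_add_atTop_nat 1))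
  rw [← limsup_nat_add _ 1]
  refine (limsup_le_limsup ?_).trans (ENNReal.limsup_add_of_left_tendsto_zero hfx _).le
  filter_upwards [eventually_ge_atTop 1] with n hn
  have hS : 0 ≤ birkhoffSum T f n (T x) := Finset.sum_nonneg fun k _ => hf _
  calc ENNReal.ofReal (birkhoffSum T f (n + 1) x / ↑(n + 1))
      = ENNReal.ofReal (f x / (n + 1) + birkhoffSum T f n (T x) / (n + 1)) := by
        rw [birkhoffSum_succ', add_div, Nat.cast_succ]
    _ ≤ ENNReal.ofReal (f x / (n + 1)) + ENNReal.ofReal (birkhoffSum T f n (T x) / n) := by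
        refine ENNReal.ofReal_add_le.trans (add_le_add le_rfl (ENNReal.ofReal_le_ofReal ?_))
        exact div_le_div_of_nonneg_left hS (by exact_mod_cast hn) (by linarith)

lemma exists_partialSups_birkhoffSum_sub_pos {q : ℝ} {x : Ω}
    (hq : ENNReal.ofReal q < limsup (fun n : ℕ => ENNReal.ofReal (birkhoffSum T f n x / n)) atTop) :
    ∃ N, 0 < partialSups (birkhoffSum T (fun y => f y - q)) N x := by
  by_contra! h
  refine hq.not_ge (limsup_le_of_le (by isBoundedDefault) ?_)
  filter_upwards [eventually_ge_atTop 1] with n hn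
  have := (le_partialSups (birkhoffSum T (fun y => f y - q)) n x).trans (h n)
  rw [birkhoffSum_sub_const] at this
  refine ENNReal.ofReal_le_ofReal ((div_le_iff₀ (by exact_mod_cast hn)).mpr ?_)
  linarith

variable [MeasurableSpace Ω] {μ : Measure Ω} [IsProbabilityMeasure μ]

/-- The set where the upper Birkhoff average exceeds `q` is `T`-subinvariant, hence null or
conull; it lies in the set where some Birkhoff sum of `f - q` is positive, on which
`∫ (f - q) ≥ 0` by the maximal ergodic theorem, so it cannot be conull. -/
lemma ae_limsup_ofReal_birkhoffSum_div_le_of_integral_lt (hT : Ergodic T μ) (hfm : Measurable f)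
    (hf : Integrable f μ) (hf0 : ∀ x, 0 ≤ f x) {q : ℝ} (hq : ∫ y, f y ∂μ < q) :
    ∀ᵐ x ∂μ, limsup (fun n : ℕ => ENNReal.ofReal (birkhoffSum T f n x / n)) atTop ≤
      ENNReal.ofReal q := by
  set s := {x | ENNReal.ofReal q <
    limsup (fun n : ℕ => ENNReal.ofReal (birkhoffSum T f n x / n)) atTop}
  have hs : MeasurableSet s := measurableSet_lt measurable_const <| Measurable.limsup fun n =>
    ((measurable_birkhoffSum hT.measurable hfm n).div_const _).ennreal_ofReal
  have hsT : s ⊆ T ⁻¹' s := fun x hx => hx.trans_le (limsup_ofReal_birkhoffSum_div_le_comp hf0 x)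
  rcases hT.ae_empty_or_univ_of_ae_le_preimage hs.nullMeasurableSet hsT.eventuallyLE with h | h
  · filter_upwards [measure_eq_zero_iff_ae_notMem.mp (ae_eq_empty.mp h)] with x hx
    exact not_lt.mp hx
  · set D := ⋃ N, {x | 0 < partialSups (birkhoffSum T (fun y => f y - q)) N x}
    have hsD : s ⊆ D := fun x hx => Set.mem_iUnion.mpr (exists_partialSups_birkhoffSum_sub_pos hx)
    have hD : D =ᵐ[μ] Set.univ :=
      ae_eq_univ.mpr (measure_mono_null (Set.compl_subset_compl.mpr hsD) (ae_eq_univ.mp h))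
    have := setIntegral_iUnion_partialSups_birkhoffSum_pos_nonneg (φ := fun y => f y - q)
      hT.toMeasurePreserving (hfm.sub measurable_const) (hf.sub (integrable_const q))
    rw [setIntegral_congr_set hD, setIntegral_univ, integral_sub hf (integrable_const q)] at this
    simp only [integral_const, probReal_univ, smul_eq_mul, one_mul, sub_nonneg] at this
    exact (hq.not_ge this).elim

theorem ae_limsup_ofReal_birkhoffSum_div_le (hT : Ergodic T μ) (hfm : Measurable f)
    (hf : Integrable f μ) (hf0 : ∀ x, 0 ≤ f x) :
    ∀ᵐ x ∂μ, limsup (fun n : ℕ => ENNReal.ofReal (birkhoffSum T f n x / n)) atTop ≤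
      ENNReal.ofReal (∫ y, f y ∂μ) := by
  have hq : Tendsto (fun m : ℕ => ∫ y, f y ∂μ + 1 / (m + 1)) atTop (𝓝 (∫ y, f y ∂μ)) := by
    simpa using tendsto_one_div_add_atTop_nhds_zero_nat.const_add (∫ y, f y ∂μ)
  filter_upwards [ae_all_iff.mpr fun m : ℕ =>
    ae_limsup_ofReal_birkhoffSum_div_le_of_integral_lt hT hfm hf hf0
      (q := ∫ y, f y ∂μ + 1 / (m + 1)) (by simp; positivity)] with x hx
  exact ge_of_tendsto' (ENNReal.tendsto_ofReal hq) hx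

end BirkhoffUpperBound

section Deviations

lemma sum_range_le_sum_range_add_sum_range {a b : ℕ → ℝ} {N : ℕ} (ha : ∀ k, 0 ≤ a k)
    (hb : ∀ k, 0 ≤ b k) (hab : ∀ k, N ≤ k → a k ≤ b k) (n : ℕ) :
    ∑ k ∈ Finset.range n, a k ≤ ∑ k ∈ Finset.range N, a k + ∑ k ∈ Finset.range n, b k := by
  rw [← Finset.sum_filter_add_sum_filter_not (Finset.range n) (· < N)]
  refine add_le_add (Finset.sum_le_sum_of_subset_of_nonneg ?_ fun k _ _ => ha k) ?_
  · exact fun k hk => Finset.mem_range.mpr (Finset.mem_filter.mp hk).2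
  · calc ∑ k ∈ (Finset.range n).filter (¬ · < N), a k
        ≤ ∑ k ∈ (Finset.range n).filter (¬ · < N), b k :=
          Finset.sum_le_sum fun k hk => hab k (not_lt.mp (Finset.mem_filter.mp hk).2)
      _ ≤ ∑ k ∈ Finset.range n, b k :=
          Finset.sum_le_sum_of_subset_of_nonneg (Finset.filter_subset _ _) fun k _ _ => hb k

lemma limsup_ofReal_abs_sum_div_le {d b : ℕ → ℝ} {N : ℕ} (hb : ∀ k, 0 ≤ b k)
    (hdb : ∀ k, N ≤ k → |d k| ≤ b k) :
    limsup (fun n : ℕ => ENNReal.ofReal |(∑ k ∈ Finset.range n, d k) / n|) atTop ≤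
      limsup (fun n : ℕ => ENNReal.ofReal ((∑ k ∈ Finset.range n, b k) / n)) atTop := by
  set C := ∑ k ∈ Finset.range N, |d k|
  have hC : Tendsto (fun n : ℕ => ENNReal.ofReal (C / n)) atTop (𝓝 0) := by
    simpa using ENNReal.tendsto_ofReal (tendsto_const_div_atTop_nhds_zero_nat C)
  refine (limsup_le_limsup (.of_forall fun n => ?_)).trans
    (ENNReal.limsup_add_of_left_tendsto_zero hC _).le
  have hsum : |∑ k ∈ Finset.range n, d k| ≤ C + ∑ k ∈ Finset.range n, b k :=
    (Finset.abs_sum_le_sum_abs _ _).trans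
      (sum_range_le_sum_range_add_sum_range (fun k => abs_nonneg (d k)) hb hdb n)
  rw [Pi.add_apply, ← ENNReal.ofReal_add (div_nonneg (Finset.sum_nonneg fun k _ => abs_nonneg _)
    n.cast_nonneg) (div_nonneg (Finset.sum_nonneg fun k _ => hb k) n.cast_nonneg), ← add_div,
    abs_div, Nat.abs_cast]
  exact ENNReal.ofReal_le_ofReal (div_le_div_of_nonneg_right hsum n.cast_nonneg)

lemma tendsto_zero_of_forall_limsup_ofReal_abs_le {u : ℕ → ℝ} {c : ℕ → ℝ≥0∞}
    (hc : Tendsto c atTop (𝓝 0)) (hu : ∀ N, limsup (fun n => ENNReal.ofReal |u n|) atTop ≤ c N) :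
    Tendsto u atTop (𝓝 0) := by
  have h0 : limsup (fun n => ENNReal.ofReal |u n|) atTop = 0 :=
    nonpos_iff_eq_zero.mp (ge_of_tendsto' hc hu)
  have h : Tendsto (fun n => ENNReal.ofReal |u n|) atTop (𝓝 0) :=
    tendsto_of_le_liminf_of_limsup_le zero_le h0.le
  rw [tendsto_zero_iff_norm_tendsto_zero]
  simpa [Function.comp_def] using (ENNReal.tendsto_toReal ENNReal.zero_ne_top).comp h

end Deviations

section TailSup

variable {Ω : Type*} {g : ℕ → Ω → ℝ} {g0 : Ω → ℝ}

lemma antitone_tailSup (ω : Ω) : Antitone fun N => tailSup g g0 N ω :=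
  fun _ _ h => biSup_mono fun _ hk => h.trans hk

lemma tendsto_tailSup_zero {ω : Ω} (h : Tendsto (fun n => g n ω) atTop (𝓝 (g0 ω))) :
    Tendsto (fun N => tailSup g g0 N ω) atTop (𝓝 0) := by
  have hu : Tendsto (fun k => ENNReal.ofReal |g k ω - g0 ω|) atTop (𝓝 0) := by
    simpa using ENNReal.tendsto_ofReal (h.sub_const (g0 ω)).abs
  have hinf : ⨅ N, tailSup g g0 N ω = 0 := limsup_eq_iInf_iSup_of_nat.symm.trans hu.limsup_eq
  simpa only [hinf] using tendsto_atTop_iInf (antitone_tailSup (g := g) (g0 := g0) ω)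

lemma abs_sub_le_toReal_tailSup {N k : ℕ} {ω : Ω} (hfin : tailSup g g0 N ω ≠ ∞) (hk : N ≤ k) :
    |g k ω - g0 ω| ≤ (tailSup g g0 N ω).toReal :=
  (ENNReal.ofReal_le_iff_le_toReal hfin).mp
    (le_iSup₂ (f := fun k (_ : N ≤ k) => ENNReal.ofReal |g k ω - g0 ω|) k hk)

variable [MeasurableSpace Ω] {P : Measure Ω}

lemma measurable_tailSup (hg : ∀ n, Measurable (g n)) (hg0 : Measurable g0) (N : ℕ) :
    Measurable (tailSup g g0 N) :=
  Measurable.iSup fun k => Measurable.iSup fun _ => ((hg k).sub hg0).abs.ennreal_ofReal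

lemma UnifIntENN.lintegral_lt_top [IsFiniteMeasure P] {F : ℕ → Ω → ℝ≥0∞}
    (hF : UnifIntENN P F) (hFm : ∀ N, Measurable (F N)) (N : ℕ) : ∫⁻ ω, F N ω ∂P < ∞ := by
  obtain ⟨α, hα⟩ := (hF.eventually_le_const zero_lt_one).exists
  set A := {ω | ENNReal.ofReal α < F N ω}
  have hA : ∫⁻ ω in A, F N ω ∂P ≤ 1 :=
    (le_iSup (fun N => ∫⁻ ω in {ω | ENNReal.ofReal α < F N ω}, F N ω ∂P) N).trans hα
  have hAc : ∫⁻ ω in Aᶜ, F N ω ∂P ≤ ENNReal.ofReal α * P Aᶜ := by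
    rw [← setLIntegral_const]
    exact setLIntegral_mono measurable_const fun ω hω => not_lt.mp hω
  rw [← lintegral_add_compl _ (measurableSet_lt measurable_const (hFm N))]
  exact ENNReal.add_lt_top.mpr ⟨hA.trans_lt one_lt_top,
    hAc.trans_lt (ENNReal.mul_lt_top ofReal_lt_top (measure_lt_top P _))⟩

lemma tendsto_lintegral_tailSup_zero (hg : ∀ n, Measurable (g n)) (hg0 : Measurable g0)
    (hconv : ∀ᵐ ω ∂P, Tendsto (fun n => g n ω) atTop (𝓝 (g0 ω)))
    (hfin : ∫⁻ ω, tailSup g g0 0 ω ∂P ≠ ∞) :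
    Tendsto (fun N => ∫⁻ ω, tailSup g g0 N ω ∂P) atTop (𝓝 0) := by
  simpa using tendsto_lintegral_of_dominated_convergence _ (measurable_tailSup hg hg0)
    (fun N => .of_forall fun ω => antitone_tailSup ω (Nat.zero_le N)) hfin
    (hconv.mono fun ω => tendsto_tailSup_zero)

variable [IsProbabilityMeasure P] {T : Ω → Ω}

theorem ae_limsup_ofReal_abs_average_deviation_le (hT : Ergodic T P)
    (hg : ∀ n, Measurable (g n)) (hg0 : Measurable g0) {N : ℕ}
    (hfin : ∫⁻ ω, tailSup g g0 N ω ∂P < ∞) :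
    ∀ᵐ ω ∂P, limsup (fun n : ℕ => ENNReal.ofReal
        |(∑ k ∈ Finset.range n, (g k (T^[k] ω) - g0 (T^[k] ω))) / n|) atTop
      ≤ ∫⁻ ω', tailSup g g0 N ω' ∂P := by
  set G := tailSup g g0 N
  have hGm : Measurable G := measurable_tailSup hg hg0 N
  have hG_lt : ∀ᵐ ω ∂P, G ω < ∞ := ae_lt_top hGm hfin.ne
  have hGi : Integrable (fun ω => (G ω).toReal) P :=
    integrable_toReal_of_lintegral_ne_top hGm.aemeasurable hfin.ne
  have hint : ENNReal.ofReal (∫ ω, (G ω).toReal ∂P) = ∫⁻ ω, G ω ∂P := by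
    rw [integral_toReal hGm.aemeasurable hG_lt, ofReal_toReal hfin.ne]
  have hdev : ∀ᵐ ω ∂P, ∀ k, N ≤ k → |g k ω - g0 ω| ≤ (G ω).toReal :=
    hG_lt.mono fun ω hω k hk => abs_sub_le_toReal_tailSup hω.ne hk
  have hdev_orbit : ∀ᵐ ω ∂P, ∀ j k, N ≤ k →
      |g k (T^[j] ω) - g0 (T^[j] ω)| ≤ (G (T^[j] ω)).toReal :=
    ae_all_iff.mpr fun j => (hT.toMeasurePreserving.iterate j).quasiMeasurePreserving.ae hdev
  filter_upwards [ae_limsup_ofReal_birkhoffSum_div_le hT hGm.ennreal_toReal hGi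
    (fun _ => toReal_nonneg), hdev_orbit] with ω hB hω
  calc _ ≤ limsup (fun n : ℕ =>
          ENNReal.ofReal ((∑ k ∈ Finset.range n, (G (T^[k] ω)).toReal) / n)) atTop :=
        limsup_ofReal_abs_sum_div_le (fun _ => toReal_nonneg) fun k hk => hω k k hk
    _ ≤ _ := hB
    _ = _ := hint

end TailSup

theorem averaged_deviations_vanish_general
    {Ω : Type*} [MeasurableSpace Ω] (P : Measure Ω) [IsProbabilityMeasure P]
    (T : Ω → Ω) (hT : Ergodic T P)
    (g : ℕ → Ω → ℝ) (g0 : Ω → ℝ)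
    (hg_meas : ∀ n, Measurable (g n)) (hg0_meas : Measurable g0)
    (hconv : ∀ᵐ ω ∂P, Tendsto (fun n => g n ω) atTop (𝓝 (g0 ω)))
    (hUI : UnifIntENN P (tailSup g g0)) :
    (∀ᵐ ω ∂P, Tendsto
      (fun n : ℕ => (∑ k ∈ Finset.range n, (g k (T^[k] ω) - g0 (T^[k] ω))) / n)
      atTop (𝓝 0))
    ∧ ∀ N : ℕ, ∀ᵐ ω ∂P,
        limsup (fun n : ℕ => ENNReal.ofReal
            |(∑ k ∈ Finset.range n, (g k (T^[k] ω) - g0 (T^[k] ω))) / n|) atTop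
          ≤ ∫⁻ ω', tailSup g g0 N ω' ∂P := by
  have hfin := hUI.lintegral_lt_top (measurable_tailSup hg_meas hg0_meas)
  have hbound := fun N : ℕ =>
    ae_limsup_ofReal_abs_average_deviation_le (N := N) hT hg_meas hg0_meas (hfin N)
  refine ⟨?_, hbound⟩
  filter_upwards [ae_all_iff.mpr hbound] with ω hω
  exact tendsto_zero_of_forall_limsup_ofReal_abs_le
    (tendsto_lintegral_tailSup_zero hg_meas hg0_meas hconv (hfin 0).ne) hω

/-- **Vanishing of the averaged deviations.** Let `T` be a measure-preserving ergodic
transformation of a probability space `(Ω, F, P)` and `g_k, g : Ω → [0,∞)` integrable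
nonnegative functions with `g_k → g` `P`-a.e. such that the tail suprema
`G_N(ω) = sup_{k ≥ N} |g_k(ω) − g(ω)|` are uniformly integrable. Then
`(1/n) Σ_{k<n} (g_k(T^k ω) − g(T^k ω)) → 0` for `P`-a.e. `ω`; more precisely, for every
`N`, `limsup_n |(1/n) Σ_{k<n} (g_k(T^k ω) − g(T^k ω))| ≤ ∫ G_N dP` for `P`-a.e. `ω`. -/
theorem averaged_deviations_vanish
    {Ω : Type*} [MeasurableSpace Ω] (P : Measure Ω) [IsProbabilityMeasure P]
    (T : Ω → Ω) (hT : Ergodic T P)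
    (g : ℕ → Ω → ℝ) (g0 : Ω → ℝ)
    (hg_meas : ∀ n, Measurable (g n)) (hg0_meas : Measurable g0)
    (hg_nonneg : ∀ n ω, 0 ≤ g n ω) (hg0_nonneg : ∀ ω, 0 ≤ g0 ω)
    (hg_int : ∀ n, Integrable (g n) P) (hg0_int : Integrable g0 P)
    (hconv : ∀ᵐ ω ∂P, Tendsto (fun n => g n ω) atTop (𝓝 (g0 ω)))
    (hUI : UnifIntENN P (tailSup g g0)) :
    (∀ᵐ ω ∂P, Tendsto
      (fun n : ℕ => (∑ k ∈ Finset.range n, (g k (T^[k] ω) - g0 (T^[k] ω))) / n)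
      atTop (𝓝 0))
    ∧ ∀ N : ℕ, ∀ᵐ ω ∂P,
        limsup (fun n : ℕ => ENNReal.ofReal
            |(∑ k ∈ Finset.range n, (g k (T^[k] ω) - g0 (T^[k] ω))) / n|) atTop
          ≤ ∫⁻ ω', tailSup g g0 N ω' ∂P :=
  averaged_deviations_vanish_general P T hT g g0 hg_meas hg0_meas hconv hUI

end
end
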